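/- For any smooth function $k(t,x)$, the operator $A_k := \sum_i \partial_{x^i}k\,\partial_{v_i}$ satisfies the commutation identity $[A_k, \widehat{Z}_j]f = -\sum_i \partial_{x^i}\big(Z_j k\big)\,\partial_{v_i} f + \frac{1}{w^0}\Big(w^0\partial_t k + \sum_i v_i\,\partial_{x^i}k\Big)\,\partial_{v_j} f$, where $\widehat{Z}_j = t\partial_{x^j} + x^j\partial_t + w^0\partial_{v_j}$, $Z_j = t\partial_{x^j} + x^j\partial_t$, and $w^0 = \sqrt{1+|v|^2}$, for all smooth $f(t,x,v)$. -/

import Mathlib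

/-- Phase space `ℝ^{1+3}_{t,x} × ℝ³_v`. -/
abbrev Phase := (Fin 4 → ℝ) × (Fin 3 → ℝ)

/-- Partial derivative in the spacetime coordinate direction `i` (coordinate `0` is `t`). -/
noncomputable def pdx (i : Fin 4) (f : Phase → ℝ) (p : Phase) : ℝ :=
  fderiv ℝ f p (Pi.single i 1, 0)

/-- Partial derivative in the velocity coordinate direction `j`. -/
noncomputable def pdv (j : Fin 3) (f : Phase → ℝ) (p : Phase) : ℝ :=
  fderiv ℝ f p (0, Pi.single j 1)

/-- `w⁰ = √(1+|v|²)`. -/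
noncomputable def w0 (v : Fin 3 → ℝ) : ℝ := Real.sqrt (1 + ∑ j : Fin 3, (v j) ^ 2)

/-- The operator `A_k f = Σᵢ ∂_{xⁱ}k ∂_{vᵢ} f` (with `k` a function of `(t,x)` only). -/
noncomputable def Ak (k : (Fin 4 → ℝ) → ℝ) (f : Phase → ℝ) (p : Phase) : ℝ :=
  ∑ i : Fin 3, fderiv ℝ k p.1 (Pi.single i.succ 1) * pdv i f p

/-- The complete lift of the Lorentz boost `Ẑⱼ = t∂_{xʲ} + xʲ∂ₜ + w⁰∂_{vⱼ}`. -/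
noncomputable def Zhat (j : Fin 3) (f : Phase → ℝ) (p : Phase) : ℝ :=
  p.1 0 * pdx j.succ f p + p.1 j.succ * pdx 0 f p + w0 p.2 * pdv j f p

/-- The Lorentz boost `Zⱼ k = t ∂_{xʲ} k + xʲ ∂ₜ k` acting on functions of `(t,x)`. -/
noncomputable def Zboost (j : Fin 3) (k : (Fin 4 → ℝ) → ℝ) (q : Fin 4 → ℝ) : ℝ :=
  q 0 * fderiv ℝ k q (Pi.single j.succ 1) + q j.succ * fderiv ℝ k q (Pi.single 0 1)

/-! ### Auxiliary lemmas -/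

section aux
variable {E : Type*} [NormedAddCommGroup E] [NormedSpace ℝ E]

lemma contDiff_dapply {f : E → ℝ} (hf : ContDiff ℝ (⊤ : ℕ∞) f) (a : E) :
    ContDiff ℝ (⊤ : ℕ∞) (fun p => fderiv ℝ f p a) :=
  (hf.fderiv_right (by simp)).clm_apply contDiff_const

lemma fderiv_dapply {f : E → ℝ} (hf : ContDiff ℝ (⊤ : ℕ∞) f) (a b : E) (p : E) :
    fderiv ℝ (fun x => fderiv ℝ f x a) p b = fderiv ℝ (fderiv ℝ f) p b a := by
  rw [show (fun x => fderiv ℝ f x a) = fun x => (fderiv ℝ f x) ((fun _ => a) x) from rfl,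
    fderiv_clm_apply ((hf.fderiv_right (m := 1) (WithTop.coe_le_coe.mpr le_top)).differentiable one_ne_zero p) (differentiableAt_const a)]
  simp

lemma fderiv_symm2 {f : E → ℝ} (hf : ContDiff ℝ (⊤ : ℕ∞) f) (a b : E) (p : E) :
    fderiv ℝ (fun x => fderiv ℝ f x a) p b = fderiv ℝ (fun x => fderiv ℝ f x b) p a := by
  rw [fderiv_dapply hf a b p, fderiv_dapply hf b a p]
  exact second_derivative_symmetric (fun y => (hf.differentiable (by simp) y).hasFDerivAt)
    (((hf.fderiv_right (m := 1) (WithTop.coe_le_coe.mpr le_top)).differentiable one_ne_zero p).hasFDerivAt) b a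

end aux

lemma w0_pos (v : Fin 3 → ℝ) : 0 < w0 v := Real.sqrt_pos.mpr (by positivity)

lemma hasFDerivAt_w0 (v : Fin 3 → ℝ) :
    HasFDerivAt w0 ((1 / (2 * w0 v)) • ∑ j : Fin 3,
      ((2 * v j) • (ContinuousLinearMap.proj j : (Fin 3 → ℝ) →L[ℝ] ℝ))) v := by
  have hg : HasFDerivAt (fun v : Fin 3 → ℝ => 1 + ∑ j : Fin 3, v j ^ 2)
      (∑ j : Fin 3, ((2 * v j) • (ContinuousLinearMap.proj j : (Fin 3 → ℝ) →L[ℝ] ℝ))) v := by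
    have h1 : ∀ j : Fin 3, HasFDerivAt (fun v : Fin 3 → ℝ => v j ^ 2)
        ((2 * v j) • (ContinuousLinearMap.proj j : (Fin 3 → ℝ) →L[ℝ] ℝ)) v := by
      intro j
      have := ((ContinuousLinearMap.proj j : (Fin 3 → ℝ) →L[ℝ] ℝ).hasFDerivAt (x := v)).pow 2
      refine this.congr_fderiv ?_
      simp
    have h2 := HasFDerivAt.fun_sum (fun j (_ : j ∈ Finset.univ) => h1 j)
    have h3 := (hasFDerivAt_const (1:ℝ) v).add h2
    exact h3.congr_fderiv (by rw [zero_add])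
  exact hg.sqrt (by positivity)

lemma fderiv_w0_apply (v u : Fin 3 → ℝ) :
    fderiv ℝ w0 v u = (∑ j : Fin 3, v j * u j) / w0 v := by
  rw [(hasFDerivAt_w0 v).fderiv]
  have hw := (w0_pos v).ne'
  simp only [ContinuousLinearMap.smul_apply, ContinuousLinearMap.sum_apply,
    ContinuousLinearMap.proj_apply, smul_eq_mul, Finset.mul_sum]
  rw [Finset.sum_div, Finset.sum_congr rfl (fun j _ => ?_)]
  field_simp

lemma diff_w0 (v : Fin 3 → ℝ) : DifferentiableAt ℝ w0 v := (hasFDerivAt_w0 v).differentiableAt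

lemma hasFDerivAt_coord (a : Fin 4) (p : Phase) :
    HasFDerivAt (fun x : Phase => x.1 a)
      ((ContinuousLinearMap.proj a).comp (ContinuousLinearMap.fst ℝ (Fin 4 → ℝ) (Fin 3 → ℝ))) p :=
  ((ContinuousLinearMap.proj a).comp (ContinuousLinearMap.fst ℝ (Fin 4 → ℝ) (Fin 3 → ℝ))).hasFDerivAt

lemma single_succ_zero (i : Fin 3) : (Pi.single (M := fun _ : Fin 4 => ℝ) i.succ 1) 0 = 0 := by
  rw [Pi.single_eq_of_ne (Fin.succ_ne_zero i).symm]

lemma single_succ_succ (i j : Fin 3) :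
    (Pi.single (M := fun _ : Fin 4 => ℝ) i.succ 1) j.succ = if j = i then 1 else 0 := by
  simp [Pi.single_apply, Fin.succ_inj]

lemma final_algebra (j : Fin 3) (w c0 q0 qjs : ℝ) (ci A B C dX dT P vv : Fin 3 → ℝ)
    (hw : w ≠ 0) :
    (∑ i : Fin 3, ci i * (q0 * A i + qjs * B i + vv i / w * P j + w * C i))
      - (q0 * ∑ i : Fin 3, (dX i * P i + ci i * A i)
         + qjs * ∑ i : Fin 3, (dT i * P i + ci i * B i)
         + w * ∑ i : Fin 3, ci i * C i)
    = -(∑ i : Fin 3, (q0 * dX i + (if j = i then 1 else 0) * c0 + qjs * dT i) * P i)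
      + 1 / w * (w * c0 + ∑ i : Fin 3, vv i * ci i) * P j := by
  have h1 : (∑ i : Fin 3, (q0 * dX i + (if j = i then 1 else 0) * c0 + qjs * dT i) * P i)
      = (∑ i : Fin 3, (q0 * dX i + qjs * dT i) * P i) + c0 * P j := by
    have key : ∀ i : Fin 3, (q0 * dX i + (if j = i then 1 else 0) * c0 + qjs * dT i) * P i
        = (q0 * dX i + qjs * dT i) * P i + (if j = i then c0 * P i else 0) := by
      intro i; split <;> ring
    rw [Finset.sum_congr rfl fun i _ => key i, Finset.sum_add_distrib, Finset.sum_ite_eq]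
    simp
  have hL : (∑ i : Fin 3, ci i * (q0 * A i + qjs * B i + vv i / w * P j + w * C i))
      = (q0 * ∑ i : Fin 3, (dX i * P i + ci i * A i)
         + qjs * ∑ i : Fin 3, (dT i * P i + ci i * B i)
         + w * ∑ i : Fin 3, ci i * C i)
        - (∑ i : Fin 3, (q0 * dX i + qjs * dT i) * P i)
        + (∑ i : Fin 3, vv i * ci i) * P j / w := by
    simp only [Finset.mul_sum, Finset.sum_mul, Finset.sum_div]
    rw [← Finset.sum_add_distrib, ← Finset.sum_add_distrib, ← Finset.sum_sub_distrib,
      ← Finset.sum_add_distrib]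
    exact Finset.sum_congr rfl fun i _ => by ring
  rw [hL, h1]
  field_simp
  ring

/-- `[A_k, Ẑⱼ] f = −Σᵢ ∂_{xⁱ}(Zⱼk) ∂_{vᵢ}f
 + (1/w⁰)(w⁰∂ₜk + Σᵢ vᵢ∂_{xⁱ}k) ∂_{vⱼ}f` for smooth `k(t,x)` and `f(t,x,v)`. -/
theorem stmt9 (k : (Fin 4 → ℝ) → ℝ) (f : Phase → ℝ)
    (hk : ContDiff ℝ (⊤ : ℕ∞) k) (hf : ContDiff ℝ (⊤ : ℕ∞) f) (j : Fin 3) (p : Phase) :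
    Ak k (Zhat j f) p - Zhat j (Ak k f) p
      = -(∑ i : Fin 3, fderiv ℝ (Zboost j k) p.1 (Pi.single i.succ 1) * pdv i f p)
        + (1 / w0 p.2)
            * (w0 p.2 * fderiv ℝ k p.1 (Pi.single 0 1)
                + ∑ i : Fin 3, p.2 i * fderiv ℝ k p.1 (Pi.single i.succ 1))
            * pdv j f p := by
  classical
  have hFd : ∀ a : Phase, Differentiable ℝ (fun x : Phase => fderiv ℝ f x a) :=
    fun a => (contDiff_dapply hf a).differentiable (by simp)
  have hcd : ∀ b : Fin 4 → ℝ, Differentiable ℝ (fun y => fderiv ℝ k y b) :=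
    fun b => (contDiff_dapply hk b).differentiable (by simp)
  -- derivative of `Zhat j f` in an arbitrary direction
  have hZ : ∀ u : Phase, fderiv ℝ (Zhat j f) p u =
      u.1 0 * fderiv ℝ f p (Pi.single j.succ 1, 0)
      + p.1 0 * fderiv ℝ (fun x : Phase => fderiv ℝ f x (Pi.single j.succ 1, 0)) p u
      + (u.1 j.succ * fderiv ℝ f p (Pi.single 0 1, 0)
        + p.1 j.succ * fderiv ℝ (fun x : Phase => fderiv ℝ f x (Pi.single 0 1, 0)) p u)
      + ((∑ l : Fin 3, p.2 l * u.2 l) / w0 p.2 * fderiv ℝ f p (0, Pi.single j 1)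
        + w0 p.2 * fderiv ℝ (fun x : Phase => fderiv ℝ f x (0, Pi.single j 1)) p u) := by
    intro u
    have h := (((hasFDerivAt_coord 0 p).mul (hFd (Pi.single j.succ 1, 0) p).hasFDerivAt).add
        ((hasFDerivAt_coord j.succ p).mul (hFd (Pi.single 0 1, 0) p).hasFDerivAt)).add
        (((diff_w0 p.2).hasFDerivAt.comp p hasFDerivAt_snd).mul
          (hFd (0, Pi.single j 1) p).hasFDerivAt)
    have e : fderiv ℝ (Zhat j f) p = _ := h.fderiv
    rw [e]
    simp only [ContinuousLinearMap.add_apply, ContinuousLinearMap.smul_apply, smul_eq_mul,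
      ContinuousLinearMap.comp_apply, ContinuousLinearMap.coe_fst', ContinuousLinearMap.coe_snd',
      ContinuousLinearMap.proj_apply, fderiv_w0_apply, Function.comp]
    ring
  -- derivative of `Ak k f` in an arbitrary direction
  have hA : ∀ u : Phase, fderiv ℝ (Ak k f) p u =
      ∑ i : Fin 3,
        (fderiv ℝ (fun y => fderiv ℝ k y (Pi.single i.succ 1)) p.1 u.1
            * fderiv ℝ f p (0, Pi.single i 1)
         + fderiv ℝ k p.1 (Pi.single i.succ 1)
            * fderiv ℝ (fun x : Phase => fderiv ℝ f x (0, Pi.single i 1)) p u) := by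
    intro u
    have h : HasFDerivAt (Ak k f) _ p :=
      HasFDerivAt.fun_sum (fun i (_ : i ∈ Finset.univ) =>
        (((hcd (Pi.single i.succ 1) p.1).hasFDerivAt.comp p hasFDerivAt_fst).mul
          (hFd (0, Pi.single i 1) p).hasFDerivAt))
    have e : fderiv ℝ (Ak k f) p = _ := h.fderiv
    rw [e]
    simp only [ContinuousLinearMap.coe_sum', Finset.sum_apply, ContinuousLinearMap.add_apply,
      ContinuousLinearMap.smul_apply, smul_eq_mul, ContinuousLinearMap.comp_apply,
      ContinuousLinearMap.coe_fst', Function.comp, pdv]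
    exact Finset.sum_congr rfl fun i _ => by ring
  -- the four pieces
  have hAZ : (∑ i : Fin 3, fderiv ℝ k p.1 (Pi.single i.succ 1)
        * fderiv ℝ (Zhat j f) p (0, Pi.single i 1))
      = ∑ i : Fin 3, fderiv ℝ k p.1 (Pi.single i.succ 1) *
          (p.1 0 * fderiv ℝ (fun x : Phase => fderiv ℝ f x (Pi.single j.succ 1, 0)) p
              (0, Pi.single i 1)
           + p.1 j.succ * fderiv ℝ (fun x : Phase => fderiv ℝ f x (Pi.single 0 1, 0)) p
              (0, Pi.single i 1)
           + p.2 i / w0 p.2 * fderiv ℝ f p (0, Pi.single j 1)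
           + w0 p.2 * fderiv ℝ (fun x : Phase => fderiv ℝ f x (0, Pi.single j 1)) p
              (0, Pi.single i 1)) := by
    refine Finset.sum_congr rfl fun i _ => ?_
    rw [hZ (0, Pi.single i 1)]
    congr 1
    simp only [Pi.zero_apply, zero_mul, zero_add, Pi.single_apply, mul_ite, mul_one, mul_zero,
      Finset.sum_ite_eq', Finset.mem_univ, if_true]
    ring
  have hXj : fderiv ℝ (Ak k f) p ((Pi.single j.succ 1 : Fin 4 → ℝ), (0 : Fin 3 → ℝ)) =
      ∑ i : Fin 3,
        (fderiv ℝ (fun y => fderiv ℝ k y (Pi.single i.succ 1)) p.1 (Pi.single j.succ 1)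
            * fderiv ℝ f p (0, Pi.single i 1)
         + fderiv ℝ k p.1 (Pi.single i.succ 1)
            * fderiv ℝ (fun x : Phase => fderiv ℝ f x (Pi.single j.succ 1, 0)) p
              (0, Pi.single i 1)) := by
    rw [hA _]
    refine Finset.sum_congr rfl fun i _ => ?_
    rw [fderiv_symm2 hf (0, Pi.single i 1) (Pi.single j.succ 1, 0) p]
  have hX0 : fderiv ℝ (Ak k f) p ((Pi.single 0 1 : Fin 4 → ℝ), (0 : Fin 3 → ℝ)) =
      ∑ i : Fin 3,
        (fderiv ℝ (fun y => fderiv ℝ k y (Pi.single i.succ 1)) p.1 (Pi.single 0 1)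
            * fderiv ℝ f p (0, Pi.single i 1)
         + fderiv ℝ k p.1 (Pi.single i.succ 1)
            * fderiv ℝ (fun x : Phase => fderiv ℝ f x (Pi.single 0 1, 0)) p
              (0, Pi.single i 1)) := by
    rw [hA _]
    refine Finset.sum_congr rfl fun i _ => ?_
    rw [fderiv_symm2 hf (0, Pi.single i 1) (Pi.single 0 1, 0) p]
  have hV : fderiv ℝ (Ak k f) p ((0 : Fin 4 → ℝ), Pi.single j 1) =
      ∑ i : Fin 3, fderiv ℝ k p.1 (Pi.single i.succ 1)
          * fderiv ℝ (fun x : Phase => fderiv ℝ f x (0, Pi.single j 1)) p (0, Pi.single i 1) := by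
    rw [hA _]
    refine Finset.sum_congr rfl fun i _ => ?_
    rw [fderiv_symm2 hf (0, Pi.single i 1) (0, Pi.single j 1) p]
    simp
  have hZb : ∀ i : Fin 3, fderiv ℝ (Zboost j k) p.1 (Pi.single i.succ 1) =
      p.1 0 * fderiv ℝ (fun y => fderiv ℝ k y (Pi.single i.succ 1)) p.1 (Pi.single j.succ 1)
      + (if j = i then 1 else 0) * fderiv ℝ k p.1 (Pi.single 0 1)
      + p.1 j.succ * fderiv ℝ (fun y => fderiv ℝ k y (Pi.single i.succ 1)) p.1 (Pi.single 0 1) := by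
    intro i
    have h := ((hasFDerivAt_apply (𝕜 := ℝ) (0 : Fin 4) p.1).mul
        (hcd (Pi.single j.succ 1) p.1).hasFDerivAt).add
        ((hasFDerivAt_apply (𝕜 := ℝ) (j.succ) p.1).mul
          (hcd (Pi.single 0 1) p.1).hasFDerivAt)
    have e : fderiv ℝ (Zboost j k) p.1 = _ := h.fderiv
    rw [e]
    simp only [ContinuousLinearMap.add_apply, ContinuousLinearMap.smul_apply, smul_eq_mul,
      ContinuousLinearMap.proj_apply, single_succ_zero, single_succ_succ]
    rw [fderiv_symm2 hk (Pi.single j.succ 1) (Pi.single i.succ 1) p.1,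
      fderiv_symm2 hk (Pi.single 0 1) (Pi.single i.succ 1) p.1]
    ring
  have hRHS : (∑ i : Fin 3, fderiv ℝ (Zboost j k) p.1 (Pi.single i.succ 1)
        * fderiv ℝ f p (0, Pi.single i 1))
      = ∑ i : Fin 3,
          (p.1 0 * fderiv ℝ (fun y => fderiv ℝ k y (Pi.single i.succ 1)) p.1 (Pi.single j.succ 1)
           + (if j = i then 1 else 0) * fderiv ℝ k p.1 (Pi.single 0 1)
           + p.1 j.succ * fderiv ℝ (fun y => fderiv ℝ k y (Pi.single i.succ 1)) p.1 (Pi.single 0 1))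
          * fderiv ℝ f p (0, Pi.single i 1) :=
    Finset.sum_congr rfl fun i _ => by rw [hZb i]
  simp only [Ak, Zhat, pdv, pdx]
  rw [hAZ, hXj, hX0, hV, hRHS]
  exact final_algebra j (w0 p.2) (fderiv ℝ k p.1 (Pi.single 0 1)) (p.1 0) (p.1 j.succ)
    (fun i => fderiv ℝ k p.1 (Pi.single i.succ 1))
    (fun i => fderiv ℝ (fun x : Phase => fderiv ℝ f x (Pi.single j.succ 1, 0)) p (0, Pi.single i 1))
    (fun i => fderiv ℝ (fun x : Phase => fderiv ℝ f x (Pi.single 0 1, 0)) p (0, Pi.single i 1))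
    (fun i => fderiv ℝ (fun x : Phase => fderiv ℝ f x (0, Pi.single j 1)) p (0, Pi.single i 1))
    (fun i => fderiv ℝ (fun y => fderiv ℝ k y (Pi.single i.succ 1)) p.1 (Pi.single j.succ 1))
    (fun i => fderiv ℝ (fun y => fderiv ℝ k y (Pi.single i.succ 1)) p.1 (Pi.single 0 1))
    (fun i => fderiv ℝ f p (0, Pi.single i 1))
    (fun i => p.2 i)
    (w0_pos p.2).ne'
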